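/- Let a, q ∈ ℝ and let J be an interval on which a + 2q·cos(2t) > 0. Let x, y : J → ℝ be twice differentiable and satisfy the Mathieu–Kapitza system x″(t) + [2q sin(2t)/(a + 2q cos(2t))]·x′(t) + (a + 2q cos(2t))·(x(t) + y(t)) = 0 and y″(t) + [2q sin(2t)/(a + 2q cos(2t))]·y′(t) − (a + 2q cos(2t))·(x(t) − y(t)) = 0 on J. Then 𝓘₂(t) = x′(t)y′(t)/(a + 2q cos(2t)) − (1/2)(x(t)² − y(t)²) + x(t)y(t) is constant on J. -/

import Mathlib

/-!
Writing `Ω = ω² = a + 2q cos 2t`, the system is `x'' - Ω'/(2Ω) x' + Ω (x + y) = 0`,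
`y'' - Ω'/(2Ω) y' - Ω (x - y) = 0`. Differentiating `x'y'/Ω`, the friction terms cancel the
`-Ω' x'y'/Ω²` coming from the quotient rule, leaving `(x - y) x' - (x + y) y'`, which is exactly
minus the derivative of the potential part `-(x² - y²)/2 + xy`. So `𝓘₂` has zero derivative for
every nonvanishing modulation `Ω`, and is constant on the interval by the mean value theorem.
-/

open Real

theorem Set.OrdConnected.eq_of_forall_hasDerivAt_eq_zero {E : Type*} [NormedAddCommGroup E]
    [NormedSpace ℝ E] {J : Set ℝ} (hJ : J.OrdConnected) {f : ℝ → E}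
    (hf : ∀ t ∈ J, HasDerivAt f 0 t) {t₁ t₂ : ℝ} (h₁ : t₁ ∈ J) (h₂ : t₂ ∈ J) :
    f t₁ = f t₂ := by
  have h := hJ.convex.norm_image_sub_le_of_norm_hasDerivWithin_le
    (fun t ht => (hf t ht).hasDerivWithinAt) (fun _ _ => norm_zero.le) h₂ h₁
  rwa [zero_mul, norm_le_zero_iff, sub_eq_zero] at h

/-- The first integral `𝓘₂` of the Kapitza system with squared modulation `Ω = ω²`. -/
noncomputable def kapitzaFirstIntegral (Ω x x' y y' : ℝ → ℝ) (t : ℝ) : ℝ :=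
  x' t * y' t / Ω t - (1 / 2) * (x t ^ 2 - y t ^ 2) + x t * y t

theorem hasDerivAt_kapitzaFirstIntegral {Ω Ω' x x' x'' y y' y'' : ℝ → ℝ} {t : ℝ}
    (hΩ : HasDerivAt Ω (Ω' t) t) (hΩ₀ : Ω t ≠ 0)
    (hx : HasDerivAt x (x' t) t) (hx' : HasDerivAt x' (x'' t) t)
    (hy : HasDerivAt y (y' t) t) (hy' : HasDerivAt y' (y'' t) t)
    (hode₁ : x'' t - Ω' t / Ω t / 2 * x' t + Ω t * (x t + y t) = 0)
    (hode₂ : y'' t - Ω' t / Ω t / 2 * y' t - Ω t * (x t - y t) = 0) :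
    HasDerivAt (kapitzaFirstIntegral Ω x x' y y') 0 t := by
  have hderiv : HasDerivAt (kapitzaFirstIntegral Ω x x' y y') _ t :=
    (((hx'.mul hy').div hΩ hΩ₀).sub (((hx.pow 2).sub (hy.pow 2)).const_mul (1 / 2))).add
      (hx.mul hy)
  refine hderiv.congr_deriv ?_
  field_simp at hode₁ hode₂
  simp only [Pi.mul_apply, Nat.cast_ofNat, pow_one, Nat.add_one_sub_one]
  field_simp
  linear_combination (y' t * hode₁ + x' t * hode₂) / 2

theorem hasDerivAt_mathieu_modulation (a q t : ℝ) :
    HasDerivAt (fun s => a + 2 * q * cos (2 * s)) (-(4 * q * sin (2 * t))) t := by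
  have h : HasDerivAt (fun s => a + 2 * q * cos (2 * s)) _ t :=
    (((hasDerivAt_id t).const_mul 2).cos.const_mul (2 * q)).const_add a
  refine h.congr_deriv ?_
  simp only [id, mul_one]
  ring

/-- Along any solution of the Mathieu–Kapitza system on an interval J where
a + 2q cos 2t > 0, the quantity
𝓘₂ = x′y′/(a + 2q cos 2t) − (1/2)(x² − y²) + xy is constant. -/
theorem mathieu_kapitza_first_integral_I2
    (a q : ℝ) (J : Set ℝ) (hJ : J.OrdConnected)
    (hpos : ∀ t ∈ J, 0 < a + 2 * q * Real.cos (2 * t))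
    (x x' x'' y y' y'' : ℝ → ℝ)
    (hx : ∀ t ∈ J, HasDerivAt x (x' t) t)
    (hx' : ∀ t ∈ J, HasDerivAt x' (x'' t) t)
    (hy : ∀ t ∈ J, HasDerivAt y (y' t) t)
    (hy' : ∀ t ∈ J, HasDerivAt y' (y'' t) t)
    (hode1 : ∀ t ∈ J, x'' t
      + (2 * q * Real.sin (2 * t) / (a + 2 * q * Real.cos (2 * t))) * x' t
      + (a + 2 * q * Real.cos (2 * t)) * (x t + y t) = 0)
    (hode2 : ∀ t ∈ J, y'' t
      + (2 * q * Real.sin (2 * t) / (a + 2 * q * Real.cos (2 * t))) * y' t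
      - (a + 2 * q * Real.cos (2 * t)) * (x t - y t) = 0) :
    ∀ t₁ ∈ J, ∀ t₂ ∈ J,
      x' t₁ * y' t₁ / (a + 2 * q * Real.cos (2 * t₁))
        - (1 / 2) * ((x t₁) ^ 2 - (y t₁) ^ 2) + x t₁ * y t₁
      = x' t₂ * y' t₂ / (a + 2 * q * Real.cos (2 * t₂))
        - (1 / 2) * ((x t₂) ^ 2 - (y t₂) ^ 2) + x t₂ * y t₂ := by
  intro t₁ h₁ t₂ h₂
  refine hJ.eq_of_forall_hasDerivAt_eq_zero
    (f := kapitzaFirstIntegral (fun s => a + 2 * q * cos (2 * s)) x x' y y') (fun t ht => ?_) h₁ h₂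
  refine hasDerivAt_kapitzaFirstIntegral (Ω' := fun t => -(4 * q * sin (2 * t)))
    (hasDerivAt_mathieu_modulation a q t) (hpos t ht).ne'
    (hx t ht) (hx' t ht) (hy t ht) (hy' t ht) ?_ ?_
  · linear_combination hode1 t ht
  · linear_combination hode2 t ht
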